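/- Suppose Ψ has strong convexity parameter μ_Ψ ≥ 0 (f is only assumed convex), and fix μ ≥ 0. Let A > 0, a > 0, L > 0, set γ = 1 + μA, γ̄ = 1 + μ(A + a), L̄ = L + μ_Ψ, and assume the weight equation L̄ a² = (A + a) γ̄. Let x₀, x_k, v ∈ ℝ^n, h ∈ ℝ, g ∈ ℝ^n, and define the estimate function ψ(x) = h + ⟨g, x⟩ + ((μ + 1/A)/2)‖x − x₀‖²; let v be its minimizer and ψ* its minimum value, and assume ψ* ≥ F(x_k). Set y = (A γ̄ x_k + a γ v)/(A γ̄ + a γ), suppose the descent condition holds at y with constant L, and set x₊ = T_L(y), c = L̄ (y − x₊). Define h̄ ∈ ℝ and ḡ ∈ ℝ^n by the identity h̄ + ⟨ḡ, x⟩ + (μ/2)‖x − x₀‖² = F(x₊) + (1/(2L̄))‖c‖² + ⟨c, x − y⟩ + (μ/2)‖x − y‖² for all x ∈ ℝ^n. Then the new estimate function ψ̄(x) = (A (h + ⟨g, x⟩) + a (h̄ + ⟨ḡ, x⟩))/(A + a) + (γ̄/(2(A + a)))‖x − x₀‖² satisfies inf_{x ∈ ℝ^n} ψ̄(x) ≥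 F(x₊). -/

import Mathlib

open Set
open scoped RealInnerProductSpace

abbrev Euc (n : ℕ) := EuclideanSpace ℝ (Fin n)

/-!
The new point `x' = T_L(y)` satisfies the gradient-mapping inequality
`F x' + ⟪c, u - y⟫ + ‖c‖² / (2 L̄) + μ_Ψ / 2 ‖u - y‖² ≤ F u` for every `u`: the prox model is
`L̄`-strongly convex, so it grows quadratically away from its minimiser `x'`, while the descent
condition and the convexity of `f` sandwich `F` between values of the model. Take `u = x_k` and
use `ψ z = ψ* + (μ + 1/A)/2 ‖z - v‖²` together with `ψ* ≥ F x_k`. In `(A + a)(ψ̄ z - F x')` the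
`‖z - x₀‖²` terms cancel because `γ̄ = γ + aμ`, the choice of `y` trades `⟪c, x_k - y⟫` for
`⟪c, v - y⟫`, and the weight equation fixes the coefficient of `‖c‖²`; what is left is
`(‖a c + γ (z - v) + aμ (z - y)‖² + aμγ ‖v - y‖²) / (2 γ̄) ≥ 0`.
-/

section InnerProductSpace

variable {E : Type*} [NormedAddCommGroup E] [InnerProductSpace ℝ E]

theorem norm_smul_add_smul_sq_add_mul_norm_sub_sq (α β : ℝ) (p q : E) :
    ‖α • p + β • q‖ ^ 2 + α * β * ‖p - q‖ ^ 2 = (α + β) * (α * ‖p‖ ^ 2 + β * ‖q‖ ^ 2) := by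
  rw [norm_add_sq_real, norm_sub_sq_real, norm_smul, norm_smul, real_inner_smul_left,
    real_inner_smul_right, Real.norm_eq_abs, Real.norm_eq_abs, mul_pow, mul_pow, sq_abs, sq_abs]
  ring

theorem sq_norm_add_two_inner_add_nonneg {α β : ℝ} (hα : 0 ≤ α) (hβ : 0 ≤ β) (c p q : E) :
    0 ≤ ‖c‖ ^ 2 + 2 * ⟪c, α • p + β • q⟫ + (α + β) * (α * ‖p‖ ^ 2 + β * ‖q‖ ^ 2) := by
  rw [← norm_smul_add_smul_sq_add_mul_norm_sub_sq, ← add_assoc, ← norm_add_sq_real]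
  positivity

theorem eq_zero_of_forall_inner_add_sq_nonneg {κ : ℝ} (hκ : 0 < κ) {p : E}
    (hp : ∀ d, 0 ≤ ⟪p, d⟫ + κ / 2 * ‖d‖ ^ 2) : p = 0 := by
  have hd := hp (-κ⁻¹ • p)
  rw [inner_smul_right, real_inner_self_eq_norm_sq, norm_smul, mul_pow, Real.norm_eq_abs, sq_abs,
    neg_sq] at hd
  have hsq : ‖p‖ ^ 2 ≤ 0 := by
    field_simp at hd
    linarith
  simpa using le_antisymm hsq (sq_nonneg _)

theorem const_add_inner_add_sq_norm_sub_eq_of_forall_le {κ : ℝ} (hκ : 0 < κ) {b : ℝ}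
    {g x₀ v : E}
    (hv : ∀ w, b + ⟪g, v⟫ + κ / 2 * ‖v - x₀‖ ^ 2 ≤ b + ⟪g, w⟫ + κ / 2 * ‖w - x₀‖ ^ 2) (w : E) :
    b + ⟪g, w⟫ + κ / 2 * ‖w - x₀‖ ^ 2
      = b + ⟪g, v⟫ + κ / 2 * ‖v - x₀‖ ^ 2 + κ / 2 * ‖w - v‖ ^ 2 := by
  have expand : ∀ w, b + ⟪g, w⟫ + κ / 2 * ‖w - x₀‖ ^ 2 = b + ⟪g, v⟫ + κ / 2 * ‖v - x₀‖ ^ 2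
      + ⟪g + κ • (v - x₀), w - v⟫ + κ / 2 * ‖w - v‖ ^ 2 := by
    intro w
    rw [show w - x₀ = (w - v) + (v - x₀) by abel, norm_add_sq_real, inner_add_left,
      real_inner_smul_left]
    simp only [inner_sub_left, inner_sub_right, real_inner_comm v w, real_inner_comm x₀ w,
      real_inner_comm x₀ v]
    ring
  have hgrad : g + κ • (v - x₀) = 0 :=
    eq_zero_of_forall_inner_add_sq_nonneg hκ fun d => by
      have := hv (v + d)
      rw [expand (v + d), add_sub_cancel_left] at this
      linarith
  rw [expand w, hgrad, inner_zero_left, add_zero]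

theorem ConvexOn.add_inner_le_of_hasGradientAt [CompleteSpace E] {s : Set E} {f : E → ℝ}
    {f' x y : E} (hf : ConvexOn ℝ s f) (hx : x ∈ s) (hy : y ∈ s) (hf' : HasGradientAt f f' x) :
    f x + ⟪f', y - x⟫ ≤ f y := by
  set φ : ℝ → ℝ := f ∘ AffineMap.lineMap x y
  have hφ : ConvexOn ℝ (Icc 0 1) φ :=
    (hf.comp_affineMap _).subset (fun t ht => hf.1.lineMap_mem hx hy ht) (convex_Icc 0 1)
  have hφ' : HasDerivAt φ ⟪f', y - x⟫ 0 := by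
    have hfx := hf'.hasFDerivAt
    rw [← AffineMap.lineMap_apply_zero x y (k := ℝ)] at hfx
    simpa using hfx.comp_hasDerivAt (0 : ℝ) AffineMap.hasDerivAt_lineMap
  have := hφ.le_slope_of_hasDerivAt (by simp) (by simp) zero_lt_one hφ'
  simpa [φ, slope, le_sub_iff_add_le'] using this

theorem StrongConvexOn.add {s : Set E} {m n : ℝ} {f g : E → ℝ} (hf : StrongConvexOn s m f)
    (hg : StrongConvexOn s n g) : StrongConvexOn s (m + n) (f + g) :=
  (UniformConvexOn.add hf hg).mono fun r => le_of_eq (by simp only [Pi.add_apply]; ring)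

theorem strongConvexOn_const_add_inner_add_sq_norm_sub {s : Set E} (hs : Convex ℝ s)
    (b L : ℝ) (w y : E) :
    StrongConvexOn s L fun z => b + ⟪w, z - y⟫ + L / 2 * ‖z - y‖ ^ 2 := by
  rw [strongConvexOn_iff_convex]
  refine (((innerₛₗ ℝ (w - L • y)).convexOn hs).add_const (b - ⟪w, y⟫ + L / 2 * ‖y‖ ^ 2)).congr
    fun z _ => ?_
  simp only [Pi.add_apply, innerₛₗ_apply_apply, norm_sub_sq_real, inner_sub_left, inner_sub_right,
    real_inner_smul_left, real_inner_comm y z]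
  ring

theorem StrongConvexOn.add_sq_norm_sub_le_of_isMinOn {s : Set E} {m : ℝ} {f : E → ℝ} {x u : E}
    (hf : StrongConvexOn s m f) (hmin : IsMinOn f s x) (hx : x ∈ s) (hu : u ∈ s) :
    f x + m / 2 * ‖u - x‖ ^ 2 ≤ f u := by
  have hsegment : ∀ t ∈ Ioo (0 : ℝ) 1, f x + (1 - t) * (m / 2 * ‖u - x‖ ^ 2) ≤ f u := by
    intro t ⟨ht0, ht1⟩
    have hcomb := hf.2 hx hu (sub_nonneg.2 ht1.le) ht0.le (sub_add_cancel 1 t)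
    have hle : f x ≤ f ((1 - t) • x + t • u) :=
      hmin (hf.1 hx hu (sub_nonneg.2 ht1.le) ht0.le (sub_add_cancel 1 t))
    rw [smul_eq_mul, smul_eq_mul, norm_sub_rev] at hcomb
    refine le_of_mul_le_mul_left ?_ ht0
    linarith
  have hlim : Continuous fun t : ℝ => f x + (1 - t) * (m / 2 * ‖u - x‖ ^ 2) := by fun_prop
  refine le_of_tendsto (x := nhdsWithin 0 (Ioi 0))
    (tendsto_nhdsWithin_of_tendsto_nhds (hlim.tendsto' 0 _ (by ring))) ?_
  filter_upwards [Ioo_mem_nhdsGT zero_lt_one] with t ht using hsegment t ht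

theorem prox_grad_step_le [CompleteSpace E] {f Ψ : E → ℝ} {g y x' : E} {L μΨ : ℝ}
    (hf : ConvexOn ℝ univ f) (hg : HasGradientAt f g y) (hΨ : StrongConvexOn univ μΨ Ψ)
    (hL : L + μΨ ≠ 0)
    (hmin : ∀ z, f y + ⟪g, x' - y⟫ + L / 2 * ‖x' - y‖ ^ 2 + Ψ x'
      ≤ f y + ⟪g, z - y⟫ + L / 2 * ‖z - y‖ ^ 2 + Ψ z)
    (hdesc : f x' ≤ f y + ⟪g, x' - y⟫ + L / 2 * ‖x' - y‖ ^ 2) (u : E) :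
    f x' + Ψ x' + ⟪(L + μΨ) • (y - x'), u - y⟫
      + 1 / (2 * (L + μΨ)) * ‖(L + μΨ) • (y - x')‖ ^ 2 + μΨ / 2 * ‖u - y‖ ^ 2 ≤ f u + Ψ u := by
  have hgrowth := ((strongConvexOn_const_add_inner_add_sq_norm_sub convex_univ (f y) L g y).add
    hΨ).add_sq_norm_sub_le_of_isMinOn (fun z _ => hmin z) (mem_univ x') (mem_univ u)
  have hgrad := hf.add_inner_le_of_hasGradientAt (mem_univ y) (mem_univ u) hg
  have hsplit : ‖u - x'‖ ^ 2 = ‖u - y‖ ^ 2 + 2 * ⟪y - x', u - y⟫ + ‖y - x'‖ ^ 2 := by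
    rw [show u - x' = (u - y) + (y - x') by abel, norm_add_sq_real, real_inner_comm]
  simp only [Pi.add_apply] at hgrowth
  have hscale : 1 / (2 * (L + μΨ)) * ‖(L + μΨ) • (y - x')‖ ^ 2 = (L + μΨ) / 2 * ‖y - x'‖ ^ 2 := by
    rw [norm_smul, mul_pow, Real.norm_eq_abs, sq_abs]
    field_simp
  rw [real_inner_smul_left, hscale]
  linear_combination hgrowth + hgrad + hdesc - (L + μΨ) / 2 * hsplit

theorem smul_sub_add_smul_sub_eq_zero_of_eq_inv_smul {α β : ℝ} {x w y : E} (h : α + β ≠ 0)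
    (hy : y = (α + β)⁻¹ • (α • x + β • w)) : α • (x - y) + β • (w - y) = 0 := by
  have hsum : (α + β) • y = α • x + β • w := by rw [hy, smul_smul, mul_inv_cancel₀ h, one_smul]
  calc α • (x - y) + β • (w - y) = (α • x + β • w) - (α + β) • y := by module
    _ = 0 := by rw [hsum, sub_self]

theorem estimate_update_lower_bound {A a μ γ γbar Lbar P Q ψstar Fp Fk : ℝ} {x₀ xk v y c z : E}
    (hA : 0 < A) (ha : 0 < a) (hμ : 0 ≤ μ)
    (hγ : γ = 1 + μ * A) (hγbar : γbar = 1 + μ * (A + a))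
    (hLbar : Lbar ≠ 0) (hweight : Lbar * a ^ 2 = (A + a) * γbar)
    (hP : P + (μ + 1 / A) / 2 * ‖z - x₀‖ ^ 2 = ψstar + (μ + 1 / A) / 2 * ‖z - v‖ ^ 2)
    (hQ : Q + μ / 2 * ‖z - x₀‖ ^ 2
      = Fp + 1 / (2 * Lbar) * ‖c‖ ^ 2 + ⟪c, z - y⟫ + μ / 2 * ‖z - y‖ ^ 2)
    (hfeas : Fk ≤ ψstar)
    (hK : Fp + ⟪c, xk - y⟫ + 1 / (2 * Lbar) * ‖c‖ ^ 2 ≤ Fk)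
    (hbal : (A * γbar) • (xk - y) + (a * γ) • (v - y) = 0) :
    Fp ≤ (A * P + a * Q) / (A + a) + γbar / (2 * (A + a)) * ‖z - x₀‖ ^ 2 := by
  have hγ_nonneg : 0 ≤ γ := by rw [hγ]; positivity
  have hγbar_pos : 0 < γbar := by rw [hγbar]; positivity
  have hAκ : A * (μ + 1 / A) = γ := by rw [hγ]; field_simp; ring
  have hweight' : γbar * (A + a) * (1 / (2 * Lbar)) = a ^ 2 / 2 := by
    field_simp; linear_combination -hweight
  have hbal' : A * γbar * ⟪c, xk - y⟫ + a * γ * ⟪c, v - y⟫ = 0 := by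
    simpa [inner_add_right, real_inner_smul_right] using congrArg (⟪c, ·⟫) hbal
  have hzv : ⟪c, z - v⟫ = ⟪c, z - y⟫ - ⟪c, v - y⟫ := by
    rw [← inner_sub_right, sub_sub_sub_cancel_right]
  have hsq :=
    sq_norm_add_two_inner_add_nonneg hγ_nonneg (mul_nonneg ha.le hμ) (a • c) (z - v) (z - y)
  rw [norm_smul, real_inner_smul_left, inner_add_right, real_inner_smul_right,
    real_inner_smul_right, mul_pow, Real.norm_eq_abs, sq_abs, hzv] at hsq
  have key : 2 * γbar * ((A + a) * Fp) ≤ 2 * γbar * (A * P + a * Q + γbar / 2 * ‖z - x₀‖ ^ 2) := by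
    subst hγ hγbar
    linear_combination (2 * (1 + μ * (A + a)) * A) * hfeas + (2 * (1 + μ * (A + a)) * A) * hK + hsq
      - (2 * (1 + μ * (A + a)) * A) * hP - (2 * (1 + μ * (A + a)) * a) * hQ
      + (1 + μ * (A + a)) * (‖z - x₀‖ ^ 2 - ‖z - v‖ ^ 2) * hAκ - 2 * ‖c‖ ^ 2 * hweight' - 2 * hbal'
  rw [show (A * P + a * Q) / (A + a) + γbar / (2 * (A + a)) * ‖z - x₀‖ ^ 2
      = (A * P + a * Q + γbar / 2 * ‖z - x₀‖ ^ 2) / (A + a) by field_simp,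
    le_div_iff₀ (by positivity)]
  linarith [le_of_mul_le_mul_left key (by positivity)]

end InnerProductSpace

theorem agmm_sc_estimate_feasibility_general {n : ℕ}
    (f Ψ F : Euc n → ℝ) (f' : Euc n → Euc n)
    (hf : ConvexOn ℝ Set.univ f)
    (hf' : ∀ z, HasGradientAt f (f' z) z)
    (μΨ : ℝ) (hμΨ : 0 ≤ μΨ)
    (hΨ : StrongConvexOn Set.univ μΨ Ψ)
    (hF : ∀ z, F z = f z + Ψ z)
    (μ : ℝ) (hμ : 0 ≤ μ)
    (A a L : ℝ) (hA : 0 < A) (ha : 0 < a)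
    (γ γbar Lbar : ℝ)
    (hγ : γ = 1 + μ * A) (hγbar : γbar = 1 + μ * (A + a)) (hLbar : Lbar = L + μΨ)
    (hweight : Lbar * a ^ 2 = (A + a) * γbar)
    (x0 xk v : Euc n) (h : ℝ) (g : Euc n)
    (hv : ∀ z, h + ⟪g, v⟫ + (μ + 1 / A) / 2 * ‖v - x0‖ ^ 2
        ≤ h + ⟪g, z⟫ + (μ + 1 / A) / 2 * ‖z - x0‖ ^ 2)
    (hfeas : F xk ≤ h + ⟪g, v⟫ + (μ + 1 / A) / 2 * ‖v - x0‖ ^ 2)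
    (y : Euc n) (hy : y = (A * γbar + a * γ)⁻¹ • ((A * γbar) • xk + (a * γ) • v))
    (xplus : Euc n)
    (hT : ∀ z, f y + ⟪f' y, xplus - y⟫ + L / 2 * ‖xplus - y‖ ^ 2 + Ψ xplus
        ≤ f y + ⟪f' y, z - y⟫ + L / 2 * ‖z - y‖ ^ 2 + Ψ z)
    (hdesc : f xplus ≤ f y + ⟪f' y, xplus - y⟫ + L / 2 * ‖xplus - y‖ ^ 2)
    (c : Euc n) (hc : c = Lbar • (y - xplus))
    (hbar : ℝ) (gbar : Euc n)
    (hid : ∀ z, hbar + ⟪gbar, z⟫ + μ / 2 * ‖z - x0‖ ^ 2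
        = F xplus + 1 / (2 * Lbar) * ‖c‖ ^ 2 + ⟪c, z - y⟫ + μ / 2 * ‖z - y‖ ^ 2) :
    ∀ z, F xplus ≤ (A * (h + ⟪g, z⟫) + a * (hbar + ⟪gbar, z⟫)) / (A + a)
        + γbar / (2 * (A + a)) * ‖z - x0‖ ^ 2 := by
  intro z
  have hγbar_pos : 0 < γbar := by rw [hγbar]; positivity
  have hLbar_ne : Lbar ≠ 0 :=
    left_ne_zero_of_mul (hweight ▸ (mul_pos (add_pos hA ha) hγbar_pos).ne')
  have hψ := const_add_inner_add_sq_norm_sub_eq_of_forall_le (by positivity) hv z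
  have hK := prox_grad_step_le hf (hf' y) hΨ (hLbar ▸ hLbar_ne) hT hdesc xk
  rw [← hLbar, ← hc, ← hF, ← hF] at hK
  have hbal := smul_sub_add_smul_sub_eq_zero_of_eq_inv_smul (by rw [hγ]; positivity) hy
  exact estimate_update_lower_bound hA ha hμ hγ hγbar hLbar_ne hweight hψ (hid z) hfeas
    ((le_add_of_nonneg_right (by positivity)).trans hK) hbal

/-- Theorem 10: estimate sequence feasibility preservation of the
Accelerated Gradient Method with Memory for strongly convex composite problems. With
`γ = 1 + μA`, `γ̄ = 1 + μ(A + a)`, `L̄ = L + μ_Ψ`, weight equation `L̄ a² = (A + a) γ̄`,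
current estimate function `ψ(x) = h + ⟨g, x⟩ + ((μ + 1/A)/2)‖x − x₀‖²` with minimizer `v`
and `ψ* ≥ F(x_k)`, test point `y = (A γ̄ x_k + a γ v)/(A γ̄ + a γ)`, `x₊ = T_L(y)` with the
descent condition at `y`, `c = L̄(y − x₊)`, and `(h̄, ḡ)` defined by the stated identity,
the new estimate function
`ψ̄(x) = (A(h + ⟨g, x⟩) + a(h̄ + ⟨ḡ, x⟩))/(A + a) + (γ̄/(2(A+a)))‖x − x₀‖²` satisfies
`inf ψ̄ ≥ F(x₊)`. -/
theorem agmm_sc_estimate_feasibility {n : ℕ}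
    (f Ψ F : Euc n → ℝ) (f' : Euc n → Euc n)
    (hf : ConvexOn ℝ Set.univ f)
    (hf' : ∀ z, HasGradientAt f (f' z) z)
    (μΨ : ℝ) (hμΨ : 0 ≤ μΨ)
    (hΨ : StrongConvexOn Set.univ μΨ Ψ)
    (hΨlsc : LowerSemicontinuous Ψ)
    (hF : ∀ z, F z = f z + Ψ z)
    (μ : ℝ) (hμ : 0 ≤ μ)
    (A a L : ℝ) (hA : 0 < A) (ha : 0 < a) (hL : 0 < L)
    (γ γbar Lbar : ℝ)
    (hγ : γ = 1 + μ * A) (hγbar : γbar = 1 + μ * (A + a)) (hLbar : Lbar = L + μΨ)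
    (hweight : Lbar * a ^ 2 = (A + a) * γbar)
    (x0 xk v : Euc n) (h : ℝ) (g : Euc n)
    (hv : ∀ z, h + ⟪g, v⟫ + (μ + 1 / A) / 2 * ‖v - x0‖ ^ 2
        ≤ h + ⟪g, z⟫ + (μ + 1 / A) / 2 * ‖z - x0‖ ^ 2)
    (hfeas : F xk ≤ h + ⟪g, v⟫ + (μ + 1 / A) / 2 * ‖v - x0‖ ^ 2)
    (y : Euc n) (hy : y = (A * γbar + a * γ)⁻¹ • ((A * γbar) • xk + (a * γ) • v))
    (xplus : Euc n)
    (hT : ∀ z, f y + ⟪f' y, xplus - y⟫ + L / 2 * ‖xplus - y‖ ^ 2 + Ψ xplus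
        ≤ f y + ⟪f' y, z - y⟫ + L / 2 * ‖z - y‖ ^ 2 + Ψ z)
    (hdesc : f xplus ≤ f y + ⟪f' y, xplus - y⟫ + L / 2 * ‖xplus - y‖ ^ 2)
    (c : Euc n) (hc : c = Lbar • (y - xplus))
    (hbar : ℝ) (gbar : Euc n)
    (hid : ∀ z, hbar + ⟪gbar, z⟫ + μ / 2 * ‖z - x0‖ ^ 2
        = F xplus + 1 / (2 * Lbar) * ‖c‖ ^ 2 + ⟪c, z - y⟫ + μ / 2 * ‖z - y‖ ^ 2) :
    ∀ z, F xplus ≤ (A * (h + ⟪g, z⟫) + a * (hbar + ⟪gbar, z⟫)) / (A + a)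
        + γbar / (2 * (A + a)) * ‖z - x0‖ ^ 2 :=
  agmm_sc_estimate_feasibility_general f Ψ F f' hf hf' μΨ hμΨ hΨ hF μ hμ A a L hA ha γ γbar Lbar hγ
    hγbar hLbar hweight x0 xk v h g hv hfeas y hy xplus hT hdesc c hc hbar gbar hid
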